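/- Let ρ be any G-invariant state on B(L²(X)) (i.e., U_R(g) ρ U_R(g)* = ρ for all g). Then for every A ∈ B(H_S)^{G_x}, (Γ_ρ ∘ ¥_x)(A) = (1/|G|) ∑_{g∈G} U_S(g) A U_S(g)*, the G-twirl of A. In particular this holds for ρ = (1/n)I and for ρ = P_1, the projection onto the constant function. -/

import Mathlib

open scoped TensorProduct
noncomputable section

/-- `L²(X)`: the complex Hilbert space of functions `X → ℂ`. -/
abbrev L2 (X : Type*) [Fintype X] := EuclideanSpace ℂ X

/-- The permutation representation of `G` on `L²(X)`, `(g·f)(x) = f(g⁻¹·x)`, as a linear map. -/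
def UR_lin {G X : Type*} [Group G] [Fintype X] [MulAction G X] (g : G) :
    L2 X →ₗ[ℂ] L2 X where
  toFun f := WithLp.toLp 2 (fun y => f (g⁻¹ • y))
  map_add' f₁ f₂ := by ext y; simp
  map_smul' c f := by ext y; simp

/-- The permutation (unitary) representation of `G` on `L²(X)`. -/
def UR (G X : Type*) [Group G] [Fintype X] [MulAction G X] :
    G →* (L2 X →L[ℂ] L2 X) where
  toFun g := (UR_lin g).toContinuousLinearMap
  map_one' := by ext f y; simp [UR_lin]
  map_mul' g h := by ext f y; simp [UR_lin, mul_inv_rev, mul_smul]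

/-- The indicator function `δ_y ∈ L²(X)`. -/
def delta {X : Type*} [Fintype X] [DecidableEq X] (y : X) : L2 X :=
  EuclideanSpace.single y (1:ℂ)

/-- The rank-one projection onto the indicator function `δ_y`. -/
def Pproj {X : Type*} [Fintype X] [DecidableEq X] (y : X) : L2 X →L[ℂ] L2 X :=
  (innerSL ℂ (delta y)).smulRight (delta y)

/-- Invariance of an operator under a subgroup, `U_S(h) A U_S(h)⁻¹ = A` for all `h ∈ S`. -/
def InvUnder {G HS : Type*} [Group G] [NormedAddCommGroup HS] [InnerProductSpace ℂ HS]
    (US : G →* (HS →L[ℂ] HS)) (S : Subgroup G) (A : HS →L[ℂ] HS) : Prop :=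
  ∀ h ∈ S, US h * A * US h⁻¹ = A

/-- The relativisation map `¥ₓ`, with canonical coset representatives. -/
def yen {G X HS : Type*} [Group G] [Finite G] [Fintype X] [DecidableEq X] [MulAction G X]
    [NormedAddCommGroup HS] [InnerProductSpace ℂ HS]
    (US : G →* (HS →L[ℂ] HS)) (x : X) (A : HS →L[ℂ] HS) :
    (HS →L[ℂ] HS) ⊗[ℂ] (L2 X →L[ℂ] L2 X) :=
  letI : Fintype (G ⧸ MulAction.stabilizer G x) := Fintype.ofFinite _
  ∑ c : G ⧸ MulAction.stabilizer G x,
    (US c.out * A * US c.out⁻¹) ⊗ₜ[ℂ] Pproj (c.out • x)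

/-- The restriction map `Γ_ω`, determined by `A ⊗ B ↦ tr(ωB) A`. -/
def Gamma {X HS : Type*} [Fintype X] [NormedAddCommGroup HS] [InnerProductSpace ℂ HS]
    (ω : L2 X →L[ℂ] L2 X) :
    (HS →L[ℂ] HS) ⊗[ℂ] (L2 X →L[ℂ] L2 X) →ₗ[ℂ] (HS →L[ℂ] HS) :=
  TensorProduct.lift
    (LinearMap.mk₂ ℂ (fun A B => (LinearMap.trace ℂ (L2 X) ↑(ω * B)) • A)
      (fun A₁ A₂ B => by simp [smul_add])
      (fun c A B => by simp [smul_smul]; ring_nf)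
      (fun A B₁ B₂ => by simp [mul_add, add_smul])
      (fun c A B => by simp [mul_smul_comm, smul_smul]))

/-- The normalised constant function, unit vector spanning the trivial subrepresentation. -/
def unitConst (X : Type*) [Fintype X] : L2 X := WithLp.toLp 2 (fun (_ : X) => ((Real.sqrt (Fintype.card X) : ℂ))⁻¹)

/-! `Γ_ρ (¥ₓ A) = ∑_c ρ_{c·x, c·x} • U(c) A U(c)⁻¹` over coset representatives `c` of `G_x`, so
only the diagonal of `ρ` matters. For a `G`-invariant state on a transitive `G`-set that diagonal is
constant, hence `1/n` by the trace condition. As `A` is `G_x`-invariant, the summand of the twirl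
is constant on left cosets of `G_x`, so the twirl is `|G_x| / |G| = 1/n` times the same sum. -/

namespace Subgroup

theorem sum_eq_card_smul_sum_quotient_out {G M : Type*} [Group G] [Fintype G] [AddCommMonoid M]
    (H : Subgroup G) [Fintype (G ⧸ H)] (f : G → M) (hf : ∀ g, ∀ h ∈ H, f (g * h) = f g) :
    ∑ g, f g = Nat.card H • ∑ c : G ⧸ H, f c.out := by
  classical
  have hcoset : ∀ g : G, f g = f (g : G ⧸ H).out := fun g => by
    have hmem : (g : G ⧸ H).out⁻¹ * g ∈ H := by rw [← QuotientGroup.eq, QuotientGroup.out_eq']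
    rw [← hf (g : G ⧸ H).out _ hmem, mul_inv_cancel_left]
  have hfiber : ∀ c : G ⧸ H,
      (Finset.univ.filter fun g : G => (g : G ⧸ H) = c).card = Nat.card H := fun c => by
    rw [← Fintype.card_subtype, ← Nat.card_eq_fintype_card]
    simpa only [Set.preimage, Set.mem_singleton_iff, Set.coe_ofPred, Nat.card_unique, mul_one]
      using QuotientGroup.card_preimage_mk H {c}
  rw [Finset.smul_sum, ← Finset.sum_fiberwise Finset.univ (fun g : G => (g : G ⧸ H))]
  refine Finset.sum_congr rfl fun c _ => ?_
  rw [← hfiber, ← Finset.sum_const]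
  refine Finset.sum_congr rfl fun g hg => ?_
  rw [hcoset, (Finset.mem_filter.1 hg).2]

end Subgroup

section PermutationModule

variable {X : Type*} [Fintype X]

theorem UR_apply {G : Type*} [Group G] [MulAction G X] (g : G) (f : L2 X) (z : X) :
    UR G X g f z = f (g⁻¹ • z) := rfl

variable [DecidableEq X]

theorem UR_delta {G : Type*} [Group G] [MulAction G X] (g : G) (y : X) :
    UR G X g (delta y) = delta (g • y) := by
  ext z
  simp only [UR_apply, delta, PiLp.single_apply, inv_smul_eq_iff]

theorem trace_eq_sum_apply_delta (T : L2 X →L[ℂ] L2 X) :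
    LinearMap.trace ℂ (L2 X) ↑T = ∑ z, T (delta z) z := by
  rw [LinearMap.trace_eq_matrix_trace ℂ (PiLp.basisFun 2 ℂ X)]
  simp only [Matrix.trace, Matrix.diag, LinearMap.toMatrix_apply, PiLp.basisFun_repr,
    PiLp.basisFun_apply]
  rfl

theorem trace_mul_Pproj (ρ : L2 X →L[ℂ] L2 X) (y : X) :
    LinearMap.trace ℂ (L2 X) ↑(ρ * Pproj y) = ρ (delta y) y := by
  rw [trace_eq_sum_apply_delta, Finset.sum_eq_single y]
  · simp [Pproj, delta]
  · intro z _ hzy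
    simp [Pproj, delta, EuclideanSpace.inner_single_right, hzy]
  · simp

end PermutationModule

theorem Gamma_tmul {X HS : Type*} [Fintype X] [NormedAddCommGroup HS] [InnerProductSpace ℂ HS]
    (ω B : L2 X →L[ℂ] L2 X) (A : HS →L[ℂ] HS) :
    Gamma ω (A ⊗ₜ[ℂ] B) = LinearMap.trace ℂ (L2 X) ↑(ω * B) • A := by
  simp [Gamma]

theorem InvUnder.conj_mul_of_mem {G HS : Type*} [Group G] [NormedAddCommGroup HS]
    [InnerProductSpace ℂ HS] {US : G →* (HS →L[ℂ] HS)} {S : Subgroup G} {A : HS →L[ℂ] HS}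
    (hA : InvUnder US S A) (g : G) {h : G} (hh : h ∈ S) :
    US (g * h) * A * US (g * h)⁻¹ = US g * A * US g⁻¹ :=
  calc US (g * h) * A * US (g * h)⁻¹ = US g * (US h * A * US h⁻¹) * US g⁻¹ := by
        simp only [mul_inv_rev, map_mul, mul_assoc]
    _ = US g * A * US g⁻¹ := by rw [hA h hh]

theorem InvUnder.sum_conj_eq_card_smul_sum_quotient {G HS : Type*} [Group G] [Fintype G]
    [NormedAddCommGroup HS] [InnerProductSpace ℂ HS] {US : G →* (HS →L[ℂ] HS)}
    {S : Subgroup G} [Fintype (G ⧸ S)] {A : HS →L[ℂ] HS} (hA : InvUnder US S A) :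
    ∑ g, US g * A * US g⁻¹ = Nat.card S • ∑ c : G ⧸ S, US c.out * A * US c.out⁻¹ :=
  S.sum_eq_card_smul_sum_quotient_out _ fun g _ hh => hA.conj_mul_of_mem g hh

open MulAction in
theorem Gamma_yen_eq_twirl_of_apply_delta_self {G X HS : Type*} [Group G] [Fintype G]
    [Fintype X] [DecidableEq X] [MulAction G X] [IsPretransitive G X]
    [NormedAddCommGroup HS] [InnerProductSpace ℂ HS] (US : G →* (HS →L[ℂ] HS))
    {x : X} {A : HS →L[ℂ] HS} (hA : InvUnder US (stabilizer G x) A) (ρ : L2 X →L[ℂ] L2 X)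
    (hρ : ∀ y : X, ρ (delta y) y = (Fintype.card X : ℂ)⁻¹) :
    Gamma ρ (yen US x A) = (Nat.card G : ℂ)⁻¹ • ∑ g : G, US g * A * US g⁻¹ := by
  let : Fintype (G ⧸ stabilizer G x) := Fintype.ofFinite _
  have hGamma : Gamma ρ (yen US x A)
      = (Fintype.card X : ℂ)⁻¹ • ∑ c : G ⧸ stabilizer G x, US c.out * A * US c.out⁻¹ := by
    simp only [yen, map_sum, Gamma_tmul, trace_mul_Pproj, hρ, Finset.smul_sum]
  have hcard : Nat.card G = Fintype.card X * Nat.card (stabilizer G x) := by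
    rw [← Subgroup.index_mul_card, index_stabilizer_of_transitive G x, Nat.card_eq_fintype_card]
  have hstab : (Nat.card (stabilizer G x) : ℂ) ≠ 0 := Nat.cast_ne_zero.2 Nat.card_pos.ne'
  rw [hGamma, hA.sum_conj_eq_card_smul_sum_quotient, ← Nat.cast_smul_eq_nsmul ℂ, smul_smul, hcard,
    Nat.cast_mul, mul_inv, mul_assoc, inv_mul_cancel₀ hstab, mul_one]

section InvariantStates

variable {G X : Type*} [Group G] [Fintype X] [DecidableEq X] [MulAction G X]
  {ρ : L2 X →L[ℂ] L2 X}

theorem apply_delta_smul_self_of_conj_UR_eq (hρ : ∀ g : G, UR G X g * ρ * UR G X g⁻¹ = ρ)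
    (g : G) (y : X) : ρ (delta (g • y)) (g • y) = ρ (delta y) y :=
  calc ρ (delta (g • y)) (g • y) = (UR G X g * ρ * UR G X g⁻¹) (delta (g • y)) (g • y) := by
        rw [hρ]
    _ = ρ (delta y) y := by
        simp only [mul_apply_eq_comp, UR_delta, UR_apply, inv_smul_smul]

theorem apply_delta_self_eq_inv_card_of_conj_UR_eq [MulAction.IsPretransitive G X]
    (htr : LinearMap.trace ℂ (L2 X) ↑ρ = 1) (hρ : ∀ g : G, UR G X g * ρ * UR G X g⁻¹ = ρ)
    (y : X) : ρ (delta y) y = (Fintype.card X : ℂ)⁻¹ := by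
  have hconst : ∀ z, ρ (delta z) z = ρ (delta y) y := fun z => by
    obtain ⟨g, rfl⟩ := MulAction.exists_smul_eq G y z
    exact apply_delta_smul_self_of_conj_UR_eq hρ g y
  refine eq_inv_of_mul_eq_one_right ?_
  rw [← htr, trace_eq_sum_apply_delta, Finset.sum_congr rfl fun z _ => hconst z,
    Finset.sum_const, Finset.card_univ, nsmul_eq_mul]

end InvariantStates

theorem unitConst_proj_apply_delta_self {X : Type*} [Fintype X] [DecidableEq X] (y : X) :
    (innerSL ℂ (unitConst X)).smulRight (unitConst X) (delta y) y
      = (Fintype.card X : ℂ)⁻¹ := by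
  have hsqrt : (Real.sqrt (Fintype.card X) : ℂ) * Real.sqrt (Fintype.card X) = Fintype.card X := by
    rw [← Complex.ofReal_mul, Real.mul_self_sqrt (Nat.cast_nonneg _), Complex.ofReal_natCast]
  simp [delta, unitConst, EuclideanSpace.inner_single_right, ← mul_inv, hsqrt]

theorem stmt9_general {G X HS : Type*} [Group G] [Fintype G] [Fintype X] [DecidableEq X]
    [MulAction G X] [MulAction.IsPretransitive G X]
    [NormedAddCommGroup HS] [InnerProductSpace ℂ HS]
    (US : G →* (HS →L[ℂ] HS))
    (x : X) (A : HS →L[ℂ] HS) (hA : InvUnder US (MulAction.stabilizer G x) A) :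
    (∀ ρ : L2 X →L[ℂ] L2 X, ρ.IsPositive → LinearMap.trace ℂ (L2 X) ↑ρ = 1 →
      (∀ g : G, UR G X g * ρ * UR G X g⁻¹ = ρ) →
      Gamma ρ (yen US x A)
        = ((Nat.card G : ℂ))⁻¹ • ∑ g : G, US g * A * US g⁻¹) ∧
    Gamma (((Fintype.card X : ℂ))⁻¹ • (1 : L2 X →L[ℂ] L2 X)) (yen US x A)
        = ((Nat.card G : ℂ))⁻¹ • ∑ g : G, US g * A * US g⁻¹ ∧
    Gamma ((innerSL ℂ (unitConst X)).smulRight (unitConst X)) (yen US x A)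
        = ((Nat.card G : ℂ))⁻¹ • ∑ g : G, US g * A * US g⁻¹ := by
  refine ⟨fun ρ _ htr hρ => ?_, ?_, ?_⟩ <;>
    refine Gamma_yen_eq_twirl_of_apply_delta_self US hA _ fun y => ?_
  · exact apply_delta_self_eq_inv_card_of_conj_UR_eq htr hρ y
  · simp [delta]
  · exact unitConst_proj_apply_delta_self y

/-- for any `G`-invariant state `ρ` on `B(L²(X))`, `Γ_ρ ∘ ¥ₓ` is the `G`-twirl;
in particular for `ρ = (1/n)I` and for `ρ = P_𝟙`. -/
theorem stmt9 {G X HS : Type*} [Group G] [Fintype G] [Fintype X] [DecidableEq X]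
    [MulAction G X] [MulAction.IsPretransitive G X]
    [NormedAddCommGroup HS] [InnerProductSpace ℂ HS] [CompleteSpace HS]
    (US : G →* (HS →L[ℂ] HS))
    (hU : ∀ g : G, ContinuousLinearMap.adjoint (US g) = US g⁻¹)
    (x : X) (A : HS →L[ℂ] HS) (hA : InvUnder US (MulAction.stabilizer G x) A) :
    (∀ ρ : L2 X →L[ℂ] L2 X, ρ.IsPositive → LinearMap.trace ℂ (L2 X) ↑ρ = 1 →
      (∀ g : G, UR G X g * ρ * UR G X g⁻¹ = ρ) →
      Gamma ρ (yen US x A)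
        = ((Nat.card G : ℂ))⁻¹ • ∑ g : G, US g * A * US g⁻¹) ∧
    Gamma (((Fintype.card X : ℂ))⁻¹ • (1 : L2 X →L[ℂ] L2 X)) (yen US x A)
        = ((Nat.card G : ℂ))⁻¹ • ∑ g : G, US g * A * US g⁻¹ ∧
    Gamma ((innerSL ℂ (unitConst X)).smulRight (unitConst X)) (yen US x A)
        = ((Nat.card G : ℂ))⁻¹ • ∑ g : G, US g * A * US g⁻¹ :=
  stmt9_general US x A hA

end
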